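/- arXiv:2109.08140 — 5 statements merged into one kernel-verified Lean document; each statement's English description precedes it below -/
import Mathlib

section
/- Let K be a maximal valued field (spherically complete: every pairwise-consistent family of congruences x ≡ αᵣ mod Iᵣ by fractional/integral ideals has a simultaneous solution). Then every O-submodule N of K^n admits an upper triangular basis: there exist a₁, …, aₙ ∈ K^n forming an upper triangular invertible matrix [a₁ … aₙ] and O-submodules I₁, …, Iₙ of K (each equal to K, O, or an ideal/fractional ideal of O) such that N = {a₁x₁ + ⋯ + aₙxₙ : xᵢ ∈ Iᵢ}. In particular N is isomorphic as an O-module to a direct sum ⊕ᵢ Iᵢ. -/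
/-!
Induction on `n`. For `N ⊆ K^(n+1)`, the vectors of `N` with last coordinate `0` form a
submodule `N₀ ⊆ K^n`, which has an upper triangular basis `a'` with modules `I'ᵢ` by induction,
and the last coordinates of `N` form a submodule `I ⊆ K`. If `v` has last coordinate `1` and
`t • v ∈ N` for every `t ∈ I`, then `N = N₀ ⊕ I v`, so `a'` (padded by `0`) followed by `v` is
an upper triangular basis of `N`.

Finding `v = (z, 1)` means solving `t • z ≡ init w (mod N₀)` for all `w ∈ N` with last
coordinate `t ≠ 0`: in the coordinates of `a'`, a family of congruences `zᵢ ≡ t⁻¹ βᵢ` modulo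
`t⁻¹ I'ᵢ`. For two such `w, w'` one of `t / t'`, `t' / t` lies in the valuation ring, say the
first, and then `w - (t / t') w' ∈ N`, which is exactly pairwise consistency; maximality of `K`
solves the system. Finally, an `O`-submodule `M ≠ K` of `K` is `x · J` for an ideal `J`, with `x`
any element outside `M`.
-/

open Module

universe u

theorem linearIndependent_of_upperTriangular {K m : Type*} [Field K] [Fintype m] [DecidableEq m]
    [LinearOrder m] {a : m → m → K} (htri : ∀ i j, j < i → a j i = 0) (hdiag : ∀ i, a i i ≠ 0) :
    LinearIndependent K a := by
  have hA : (Matrix.of a).transpose.IsUpperTriangular := fun i j hij => htri i j hij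
  have hdet : IsUnit (Matrix.of a).transpose.det := by
    rw [Matrix.det_of_isUpperTriangular hA]
    exact isUnit_iff_ne_zero.2 (Finset.prod_ne_zero_iff.2 fun i _ => hdiag i)
  exact Matrix.linearIndependent_cols_iff_isUnit.2 ((Matrix.isUnit_iff_isUnit_det _).2 hdet)

theorem Module.Basis.exists_forall_mem_and_eq_sum_iff {ι R V : Type*} [Fintype ι] [CommSemiring R]
    [AddCommMonoid V] [Module R V] {T : Type*} [SetLike T R] (b : Basis ι R V) (s : ι → T)
    (x : V) :
    (∃ c : ι → R, (∀ i, c i ∈ s i) ∧ x = ∑ i, c i • b i) ↔ ∀ i, b.repr x i ∈ s i := by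
  constructor
  · rintro ⟨c, hc, rfl⟩ i
    rw [b.repr_sum_self]
    exact hc i
  · exact fun h => ⟨fun i => b.repr x i, h, (b.sum_repr x).symm⟩

theorem nonempty_linearEquiv_pi_of_linearIndependent {ι R S V : Type*} [Fintype ι]
    [CommSemiring R] [CommSemiring S] [Algebra R S] [AddCommMonoid V] [Module S V] [Module R V]
    [IsScalarTower R S V] {a : ι → V} (ha : LinearIndependent S a) (I : ι → Submodule R S)
    {N : Submodule R V} (hN : ∀ x, x ∈ N ↔ ∃ c : ι → S, (∀ i, c i ∈ I i) ∧ x = ∑ i, c i • a i) :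
    Nonempty (N ≃ₗ[R] ((i : ι) → I i)) := by
  let f : ((i : ι) → I i) →ₗ[R] V := (Fintype.linearCombination S a).restrictScalars R ∘ₗ
    LinearMap.pi fun i => (I i).subtype ∘ₗ LinearMap.proj i
  have hf : Function.Injective f :=
    (linearIndependent_iff_injective_fintypeLinearCombination.1 ha).comp
      fun c d h => funext fun i => Subtype.ext (congrFun h i)
  have hrange : LinearMap.range f = N := by
    ext x
    rw [LinearMap.mem_range, hN]
    constructor
    · rintro ⟨c, rfl⟩
      exact ⟨fun i => c i, fun i => (c i).2, rfl⟩
    · rintro ⟨c, hc, rfl⟩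
      exact ⟨fun i => ⟨c i, hc i⟩, rfl⟩
  exact ⟨((LinearEquiv.ofInjective f hf).trans (LinearEquiv.ofEq _ _ hrange)).symm⟩

section SnocZero

variable (R M : Type*) [Semiring R] [AddCommMonoid M] [Module R M] (n : ℕ)

def snocZero : (Fin n → M) →ₗ[R] (Fin (n + 1) → M) where
  toFun z := Fin.snoc z 0
  map_add' y z := by
    funext i
    refine Fin.lastCases ?_ (fun i => ?_) i <;> simp
  map_smul' c z := by
    funext i
    refine Fin.lastCases ?_ (fun i => ?_) i <;> simp

variable {R M n}

@[simp]
theorem snocZero_apply (z : Fin n → M) : snocZero R M n z = Fin.snoc z 0 := rfl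

theorem snocZero_init {y : Fin (n + 1) → M} (hy : y (Fin.last n) = 0) :
    snocZero R M n (Fin.init y) = y := by
  rw [snocZero_apply, ← hy, Fin.snoc_init_self]

end SnocZero

section SnocColumn

variable {S : Type*} [Semiring S] {n : ℕ}

abbrev snocColumn (a : Fin n → Fin n → S) (v : Fin (n + 1) → S) : Fin (n + 1) → Fin (n + 1) → S :=
  Fin.snoc (α := fun _ => Fin (n + 1) → S) (fun j => snocZero S S n (a j)) v

theorem snocColumn_apply_eq_zero_of_lt {a : Fin n → Fin n → S} (htri : ∀ i j, j < i → a j i = 0)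
    (v : Fin (n + 1) → S) (i j : Fin (n + 1)) (hij : j < i) :
    snocColumn a v j i = 0 := by
  induction j using Fin.lastCases with
  | last => exact absurd hij (Fin.le_last i).not_gt
  | cast j =>
    induction i using Fin.lastCases with
    | last => simp
    | cast i => simpa using htri i j (Fin.castSucc_lt_castSucc_iff.1 hij)

theorem snocColumn_apply_self_ne_zero {a : Fin n → Fin n → S} (hdiag : ∀ i, a i i ≠ 0)
    {v : Fin (n + 1) → S} (hv : v (Fin.last n) ≠ 0) (i : Fin (n + 1)) :
    snocColumn a v i i ≠ 0 := by
  induction i using Fin.lastCases with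
  | last => simpa using hv
  | cast i => simpa using hdiag i

theorem sum_smul_snocColumn (c : Fin (n + 1) → S) (a : Fin n → Fin n → S)
    (v : Fin (n + 1) → S) :
    ∑ i, c i • snocColumn a v i =
      snocZero S S n (∑ i, c i.castSucc • a i) + c (Fin.last n) • v := by
  simp [Fin.sum_univ_castSucc, map_sum]

end SnocColumn

theorem mem_iff_exists_sum_smul_snocColumn {R S : Type*} [CommRing R] [CommRing S] [Algebra R S]
    {n : ℕ} {N : Submodule R (Fin (n + 1) → S)} {v : Fin (n + 1) → S}
    (hv1 : v (Fin.last n) = 1) (hv : ∀ w ∈ N, w (Fin.last n) • v ∈ N)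
    {a : Fin n → Fin n → S} {I : Fin n → Submodule R S}
    (hN : ∀ z, snocZero S S n z ∈ N ↔ ∃ c : Fin n → S, (∀ i, c i ∈ I i) ∧ z = ∑ i, c i • a i)
    (x : Fin (n + 1) → S) :
    x ∈ N ↔ ∃ c : Fin (n + 1) → S,
      (∀ i, c i ∈ Fin.snoc (α := fun _ => Submodule R S) I
        (N.map (LinearMap.proj (Fin.last n))) i) ∧
      x = ∑ i, c i • snocColumn a v i := by
  simp_rw [sum_smul_snocColumn]
  constructor
  · intro hx
    have hlast : (x - x (Fin.last n) • v) (Fin.last n) = 0 := by simp [hv1]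
    obtain ⟨c, hc, hy⟩ := (hN (Fin.init (x - x (Fin.last n) • v))).1 <| by
      rw [snocZero_init hlast]
      exact N.sub_mem hx (hv x hx)
    refine ⟨Fin.snoc c (x (Fin.last n)), fun i => ?_, ?_⟩
    · refine Fin.lastCases ?_ (fun i => ?_) i
      · simp only [Fin.snoc_last]
        exact ⟨x, hx, rfl⟩
      · simpa using hc i
    · simp only [Fin.snoc_castSucc, Fin.snoc_last]
      rw [← hy, snocZero_init hlast, sub_add_cancel]
  · rintro ⟨c, hc, rfl⟩
    obtain ⟨w, hw, hwl⟩ : c (Fin.last n) ∈ N.map (LinearMap.proj (Fin.last n)) := by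
      simpa using hc (Fin.last n)
    refine N.add_mem ((hN _).2 ⟨_, fun i => by simpa using hc i.castSucc, rfl⟩) ?_
    rw [← hwl]
    exact hv w hw

namespace ValuationSubring

variable {K : Type u} [Field K] {O : ValuationSubring K} {n : ℕ}

def IsScaledIdeal (M : Submodule O K) : Prop :=
  ∃ (b : K) (J : Ideal O), (M : Set K) = (fun x => b * x) '' (Subtype.val '' (J : Set O))

theorem div_mem_of_mem_of_notMem {M : Submodule O K} {m x : K} (hm : m ∈ M) (hx : x ∉ M) :
    m / x ∈ O := by
  rcases O.mem_or_inv_mem (m / x) with h | h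
  · exact h
  · rcases eq_or_ne m 0 with rfl | hm0
    · simp
    · have : (⟨(m / x)⁻¹, h⟩ : O) • m = x := by
        change (m / x)⁻¹ * m = x
        rw [inv_div, div_mul_cancel₀ _ hm0]
      exact absurd (this ▸ M.smul_mem _ hm) hx

theorem eq_top_or_isScaledIdeal (M : Submodule O K) : M = ⊤ ∨ IsScaledIdeal M := by
  refine or_iff_not_imp_left.2 fun hM => ?_
  obtain ⟨x, hx⟩ : ∃ x, x ∉ M := by simpa [Submodule.eq_top_iff'] using hM
  have hx0 : x ≠ 0 := fun h => hx (h ▸ M.zero_mem)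
  refine ⟨x, M.comap (LinearMap.toSpanSingleton O K x), Set.ext fun m => ⟨fun hm => ?_, ?_⟩⟩
  · refine ⟨m / x, ⟨⟨m / x, div_mem_of_mem_of_notMem hm hx⟩, ?_, rfl⟩, mul_div_cancel₀ m hx0⟩
    change m / x * x ∈ M
    rwa [div_mul_cancel₀ m hx0]
  · rintro ⟨_, ⟨t, ht, rfl⟩, rfl⟩
    change (t : K) * x ∈ M at ht
    rwa [mul_comm] at ht

def IsSphericallyComplete (O : ValuationSubring K) : Prop :=
  ∀ (ι : Type u) (α : ι → K) (I : ι → Submodule O K), (∀ r, IsScaledIdeal (I r)) →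
    (∀ r s, ∃ x, x - α r ∈ I r ∧ x - α s ∈ I s) → ∃ x, ∀ r, x - α r ∈ I r

namespace IsSphericallyComplete

theorem exists_forall_sub_mem (hO : IsSphericallyComplete O) {ι : Type u} (α : ι → K)
    (I : ι → Submodule O K) (hpair : ∀ r s, ∃ x, x - α r ∈ I r ∧ x - α s ∈ I s) :
    ∃ x, ∀ r, x - α r ∈ I r := by
  -- congruences modulo `⊤` are vacuous, and all the others are modulo scaled ideals
  obtain ⟨x, hx⟩ := hO {r // I r ≠ ⊤} (fun r => α r) (fun r => I r)
    (fun r => (eq_top_or_isScaledIdeal _).resolve_left r.2) (fun r s => hpair r s)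
  refine ⟨x, fun r => ?_⟩
  by_cases hr : I r = ⊤
  · simp [hr]
  · exact hx ⟨r, hr⟩

theorem exists_forall_mul_sub_mem (hO : IsSphericallyComplete O) {ι : Type u} (t : ι → K)
    (ht : ∀ r, t r ≠ 0) (β : ι → K) (I : Submodule O K)
    (hcompat : ∀ r s, t r / t s ∈ O → β r - t r / t s * β s ∈ I) :
    ∃ x, ∀ r, t r * x - β r ∈ I := by
  have hmem : ∀ r x, x - (t r)⁻¹ * β r ∈ I.comap (LinearMap.mulLeft O (t r)) ↔
      t r * x - β r ∈ I := fun r x => by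
    rw [Submodule.mem_comap, LinearMap.mulLeft_apply, mul_sub, mul_inv_cancel_left₀ (ht r)]
  have hone : ∀ r s, t r / t s ∈ O → t r * ((t s)⁻¹ * β s) - β r ∈ I ∧
      t s * ((t s)⁻¹ * β s) - β s ∈ I := fun r s hrs => by
    refine ⟨?_, by simp [mul_inv_cancel_left₀ (ht s)]⟩
    rw [← neg_sub, ← mul_assoc, ← div_eq_mul_inv]
    exact I.neg_mem (hcompat r s hrs)
  obtain ⟨x, hx⟩ := hO.exists_forall_sub_mem (fun r => (t r)⁻¹ * β r)
    (fun r => I.comap (LinearMap.mulLeft O (t r))) fun r s => by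
      simp only [hmem]
      rcases O.mem_or_inv_mem (t r / t s) with hrs | hsr
      · exact ⟨_, hone r s hrs⟩
      · rw [inv_div] at hsr
        exact ⟨_, (hone s r hsr).symm⟩
  exact ⟨x, fun r => (hmem r x).1 (hx r)⟩

theorem exists_last_eq_one_forall_smul_mem (hO : IsSphericallyComplete O) {ι : Type*}
    [Fintype ι] (b : Basis ι K (Fin n → K)) (I : ι → Submodule O K)
    (N : Submodule O (Fin (n + 1) → K))
    (hN : ∀ z, snocZero K K n z ∈ N ↔ ∀ i, b.repr z i ∈ I i) :
    ∃ v : Fin (n + 1) → K, v (Fin.last n) = 1 ∧ ∀ w ∈ N, w (Fin.last n) • v ∈ N := by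
  let W := {w : Fin (n + 1) → K // w ∈ N ∧ w (Fin.last n) ≠ 0}
  have hcompat : ∀ (w w' : W) (i : ι), w.1 (Fin.last n) / w'.1 (Fin.last n) ∈ O →
      b.repr (Fin.init w.1) i - w.1 (Fin.last n) / w'.1 (Fin.last n) * b.repr (Fin.init w'.1) i
        ∈ I i := by
    intro w w' i hq
    set u := w.1 - (⟨_, hq⟩ : O) • w'.1
    have hu : u (Fin.last n) = 0 := by
      change w.1 (Fin.last n) - w.1 (Fin.last n) / w'.1 (Fin.last n) * w'.1 (Fin.last n) = 0
      rw [div_mul_cancel₀ _ w'.2.2, sub_self]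
    have huN : snocZero K K n (Fin.init u) ∈ N := by
      rw [snocZero_init hu]
      exact N.sub_mem w.2.1 (N.smul_mem _ w'.2.1)
    have := (hN _).1 huN i
    rwa [show Fin.init u = Fin.init w.1 - (w.1 (Fin.last n) / w'.1 (Fin.last n)) • Fin.init w'.1
      from rfl, map_sub, map_smul] at this
  choose x hx using fun i => hO.exists_forall_mul_sub_mem (fun w : W => w.1 (Fin.last n))
    (fun w => w.2.2) (fun w => b.repr (Fin.init w.1) i) (I i) fun w w' => hcompat w w' i
  set z := b.equivFun.symm x
  have hz : ∀ i, b.repr z i = x i := fun i => congrFun (b.equivFun.apply_symm_apply x) i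
  refine ⟨Fin.snoc z 1, Fin.snoc_last _ _, fun w hw => ?_⟩
  rcases eq_or_ne (w (Fin.last n)) 0 with h0 | h0
  · rw [h0, zero_smul]
    exact N.zero_mem
  have hdiff : w (Fin.last n) • (Fin.snoc z 1 : Fin (n + 1) → K) - w =
      snocZero K K n (w (Fin.last n) • z - Fin.init w) := by
    funext i
    refine Fin.lastCases ?_ (fun i => ?_) i <;> simp [Fin.init]
  have hmem : w (Fin.last n) • (Fin.snoc z 1 : Fin (n + 1) → K) - w ∈ N := by
    rw [hdiff, hN]
    intro i
    simpa [hz] using hx i ⟨w, hw, h0⟩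
  simpa using N.add_mem hmem hw

theorem exists_upperTriangular_basis (hO : IsSphericallyComplete O) :
    ∀ {n : ℕ} (N : Submodule O (Fin n → K)),
      ∃ (a : Fin n → Fin n → K) (I : Fin n → Submodule O K),
        (∀ i j, j < i → a j i = 0) ∧ (∀ i, a i i ≠ 0) ∧
        ∀ x, x ∈ N ↔ ∃ c : Fin n → K, (∀ i, c i ∈ I i) ∧ x = ∑ i, c i • a i
  | 0, N => ⟨Fin.elim0, Fin.elim0, nofun, nofun, fun x => by
      simpa [Subsingleton.elim x 0] using N.zero_mem⟩
  | n + 1, N => by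
    obtain ⟨a, I, htri, hdiag, hN₀⟩ :=
      exists_upperTriangular_basis hO (N.comap ((snocZero K K n).restrictScalars O))
    have ha := linearIndependent_of_upperTriangular htri hdiag
    let b := Basis.mk ha (ha.span_eq_top_of_card_eq_finrank' (by simp)).ge
    obtain ⟨v, hv1, hv⟩ := hO.exists_last_eq_one_forall_smul_mem b I N fun z => by
      rw [← b.exists_forall_mem_and_eq_sum_iff]
      simpa [b] using hN₀ z
    exact ⟨_, _, snocColumn_apply_eq_zero_of_lt htri v,
      snocColumn_apply_self_ne_zero hdiag (hv1 ▸ one_ne_zero),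
      mem_iff_exists_sum_smul_snocColumn hv1 hv hN₀⟩

end IsSphericallyComplete

end ValuationSubring

/-- Let `K` be a maximal (spherically complete) valued field with valuation ring `O`:
every pairwise-consistent family of congruences `x − αᵣ ∈ Iᵣ` by fractional or
integral ideals `Iᵣ` of `O` has a simultaneous solution.  Then every `O`-submodule
`N` of `K^n` admits an upper triangular basis: there are `a₁, …, aₙ ∈ K^n` forming
an upper triangular invertible matrix and `O`-submodules `I₁, …, Iₙ` of `K`, each
equal to `K` or to a (fractional or integral) ideal of `O` (in particular possibly
`O` itself), such that `N = {a₁x₁ + ⋯ + aₙxₙ : xᵢ ∈ Iᵢ}`.  In particular `N` is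
isomorphic as an `O`-module to the direct sum `⊕ᵢ Iᵢ`. -/
theorem maximal_field_submodule_upper_triangular_basis
    (K : Type) [Field K] (O : ValuationSubring K)
    (hmax : ∀ (ι : Type) (α : ι → K) (I : ι → Submodule O K),
      (∀ r : ι, ∃ (a : K) (J : Ideal O),
          (I r : Set K) = (fun x => a * x) '' (Subtype.val '' (J : Set O))) →
      (∀ r s : ι, ∃ x : K, x - α r ∈ I r ∧ x - α s ∈ I s) →
      ∃ x : K, ∀ r : ι, x - α r ∈ I r)
    (n : ℕ) (N : Submodule O (Fin n → K)) :
    ∃ (a : Fin n → Fin n → K) (I : Fin n → Submodule O K),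
      -- the matrix with columns `a j` is upper triangular and invertible
      (∀ i j : Fin n, (j : ℕ) < (i : ℕ) → a j i = 0) ∧
      (∀ i : Fin n, a i i ≠ 0) ∧
      LinearIndependent K a ∧
      -- each `Iᵢ` is `K`, `O`, or a fractional/integral ideal of `O`
      (∀ i : Fin n, I i = ⊤ ∨ ∃ (b : K) (J : Ideal O),
          (I i : Set K) = (fun x => b * x) '' (Subtype.val '' (J : Set O))) ∧
      (N : Set (Fin n → K)) =
        {x | ∃ c : Fin n → K, (∀ i : Fin n, c i ∈ I i) ∧ x = ∑ i : Fin n, c i • a i} ∧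
      Nonempty (N ≃ₗ[O] ((i : Fin n) → I i)) := by
  obtain ⟨a, I, htri, hdiag, hN⟩ :=
    ValuationSubring.IsSphericallyComplete.exists_upperTriangular_basis hmax N
  have ha := linearIndependent_of_upperTriangular htri hdiag
  exact ⟨a, I, htri, hdiag, ha, fun i => ValuationSubring.eq_top_or_isScaledIdeal (I i), Set.ext hN,
    nonempty_linearEquiv_pi_of_linearIndependent ha I hN⟩
end

section
/- Let K be a maximal (spherically complete) valued field with valuation ring O, and let M, N ⊆ K be O-submodules. For any O-module homomorphism h : M → K/N there exists a ∈ K such that h(x) = ax + N for all x ∈ M. -/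
/-!
Choose lifts `c x ∈ K` of the values `h x`. The element `a` should solve the congruences
`a ≡ c x / x` modulo `x⁻¹ N`, one for each nonzero `x ∈ M`. Each modulus is a multiple of an
ideal of `O` because `N = z J` for any `z ∉ N`, and any two congruences are compatible: if
`x / y ∈ O` then `h x = (x / y) • h y`, so `c y / y` solves both. Maximality of `K` provides a
common solution `a`, and then `a x - c x ∈ N` for every `x ∈ M`.
-/

namespace Submodule

theorem smul_sub_mem_of_mk_eq {R M P : Type*} [Ring R] [AddCommGroup M] [Module R M]
    [AddCommGroup P] [Module R P] {N : Submodule R P} (h : M →ₗ[R] P ⧸ N) {x y : M}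
    {cx cy : P} (hx : Quotient.mk cx = h x) (hy : Quotient.mk cy = h y) (r : R)
    (hxy : x = r • y) : r • cy - cx ∈ N := by
  rw [← Quotient.eq, Quotient.mk_smul, hx, hy, hxy, map_smul]

theorem coe_comap_mulLeft {R K : Type*} [CommSemiring R] [Field K] [Algebra R K]
    (N : Submodule R K) {x : K} (hx : x ≠ 0) :
    (N.comap (LinearMap.mulLeft R x) : Set K) = (x⁻¹ * ·) '' N := by
  ext w
  refine ⟨fun hw => ⟨x * w, hw, by field_simp⟩, ?_⟩
  rintro ⟨n, hn, rfl⟩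
  simpa [hx] using hn

end Submodule

namespace ValuationSubring

variable {K : Type*} [Field K] {O : ValuationSubring K}

theorem div_mem_of_mem_of_notMem_s8 {N : Submodule O K} {n z : K} (hn : n ∈ N) (hz : z ∉ N) :
    n / z ∈ O := by
  by_contra hnz
  have hzn : z / n ∈ O := by simpa using (O.mem_or_inv_mem (n / z)).resolve_left hnz
  have hn0 : n ≠ 0 := by
    rintro rfl
    simp at hnz
  apply hz
  simpa [Algebra.smul_def, div_mul_cancel₀ z hn0] using N.smul_mem ⟨z / n, hzn⟩ hn

theorem exists_coe_submodule_eq_mul_ideal {N : Submodule O K} (hN : N ≠ ⊤) :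
    ∃ (z : K) (J : Ideal O), (N : Set K) = (z * ·) '' (Subtype.val '' (J : Set O)) := by
  obtain ⟨z, hz⟩ : ∃ z, z ∉ N := by simpa [Submodule.eq_top_iff'] using hN
  have hz0 : z ≠ 0 := fun h0 => hz (h0 ▸ N.zero_mem)
  refine ⟨z, (N.comap (LinearMap.mulLeft O z)).comap (Algebra.linearMap O K), ?_⟩
  ext n
  simp only [Set.mem_image, SetLike.mem_coe, Submodule.mem_comap, exists_exists_and_eq_and]
  refine ⟨fun hn => ⟨⟨n / z, div_mem_of_mem_of_notMem_s8 hn hz⟩, ?_, ?_⟩, ?_⟩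
  · simpa [mul_div_cancel₀ n hz0] using hn
  · simp [mul_div_cancel₀ n hz0]
  · rintro ⟨o, ho, rfl⟩
    simpa using ho

theorem exists_coe_comap_mulLeft_eq_mul_ideal {N : Submodule O K} (hN : N ≠ ⊤) {x : K}
    (hx : x ≠ 0) : ∃ (a : K) (J : Ideal O),
      (N.comap (LinearMap.mulLeft O x) : Set K) = (a * ·) '' (Subtype.val '' (J : Set O)) := by
  obtain ⟨z, J, hzJ⟩ := exists_coe_submodule_eq_mul_ideal hN
  refine ⟨x⁻¹ * z, J, ?_⟩
  rw [N.coe_comap_mulLeft hx, hzJ, Set.image_image]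
  simp_rw [mul_assoc]

end ValuationSubring

section Lifts

variable {K : Type*} [Field K] {O : ValuationSubring K} {M N : Submodule O K}
  (h : M →ₗ[O] K ⧸ N) {c : M → K} (hc : ∀ x, Submodule.Quotient.mk (c x) = h x)
include hc

theorem mul_sub_div_lift_mem_of_div_mem {x y : M} (hx : (x : K) ≠ 0) (hy : (y : K) ≠ 0)
    (hxy : (x : K) / y ∈ O) : (x : K) * (c y / y - c x / x) ∈ N := by
  have hsmul : x = (⟨x / y, hxy⟩ : O) • y :=
    Subtype.ext (by simp [Algebra.smul_def, div_mul_cancel₀ _ hy])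
  convert Submodule.smul_sub_mem_of_mk_eq h (hc x) (hc y) _ hsmul using 1
  simp only [Algebra.smul_def, ValuationSubring.algebraMap_apply]
  field_simp

theorem exists_lift_congruence_pair {x y : M} (hx : (x : K) ≠ 0) (hy : (y : K) ≠ 0) :
    ∃ a : K, (x : K) * (a - c x / x) ∈ N ∧ (y : K) * (a - c y / y) ∈ N := by
  wlog hxy : (x : K) / y ∈ O generalizing x y
  · obtain ⟨a, hay, hax⟩ :=
      this hy hx (by simpa using (O.mem_or_inv_mem _).resolve_left hxy)
    exact ⟨a, hax, hay⟩
  exact ⟨c y / y, mul_sub_div_lift_mem_of_div_mem h hc hx hy hxy, by simp⟩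

end Lifts

/-- Let `K` be a maximal (spherically complete) valued field with valuation ring `O`
(every pairwise-consistent family of congruences `x − αᵣ ∈ Iᵣ` by fractional or
integral ideals has a simultaneous solution), and let `M`, `N` be `O`-submodules of
`K`.  For any `O`-module homomorphism `h : M → K/N` there exists `a ∈ K` such that
`h(x) = a·x + N` for all `x ∈ M`. -/
theorem hom_to_quotient_is_linear
    (K : Type) [Field K] (O : ValuationSubring K)
    (hmax : ∀ (ι : Type) (α : ι → K) (I : ι → Submodule O K),
      (∀ r : ι, ∃ (a : K) (J : Ideal O),
          (I r : Set K) = (fun x => a * x) '' (Subtype.val '' (J : Set O))) →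
      (∀ r s : ι, ∃ x : K, x - α r ∈ I r ∧ x - α s ∈ I s) →
      ∃ x : K, ∀ r : ι, x - α r ∈ I r)
    (M N : Submodule O K) (h : M →ₗ[O] (K ⧸ N)) :
    ∃ a : K, ∀ x : M, h x = Submodule.Quotient.mk (a * (x : K)) := by
  rcases eq_or_ne N ⊤ with rfl | hN
  · have : Subsingleton (K ⧸ (⊤ : Submodule O K)) := Submodule.Quotient.subsingleton_iff.2 rfl
    exact ⟨0, fun _ => Subsingleton.elim _ _⟩
  choose c hc using fun x : M => Submodule.Quotient.mk_surjective N (h x)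
  obtain ⟨a, ha⟩ := hmax {x : M // (x : K) ≠ 0} (fun x => c x / x)
    (fun x => N.comap (LinearMap.mulLeft O (x : K)))
    (fun x => ValuationSubring.exists_coe_comap_mulLeft_eq_mul_ideal hN x.2)
    (fun x y => exists_lift_congruence_pair h hc x.2 y.2)
  refine ⟨a, fun x => ?_⟩
  rcases eq_or_ne (x : K) 0 with hx | hx
  · obtain rfl : x = 0 := Subtype.ext hx
    simp
  rw [← hc x, eq_comm, Submodule.Quotient.eq]
  simpa [mul_sub, mul_div_cancel₀ _ hx, mul_comm] using ha ⟨x, hx⟩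
end

section
/- Let V be a finite-dimensional valued vector space over a valued field K with value group Γ. Then the action of Γ on the value set Γ(V) has at most dim_K(V) orbits. -/
/-!
Choose for every orbit of `Γ` on `Γ(V)` a vector whose value lies in it. These vectors are
linearly independent: in a relation `∑ cᵢ • xᵢ = 0` the nonzero terms have values in pairwise
distinct orbits, hence pairwise distinct values, and by the ultrametric inequality a finite sum
of nonzero vectors with pairwise distinct values is nonzero. So there are at most `dim_K V`
orbits, and their chosen representatives form the required finite set.
-/

open AddAction

theorem map_neg_one_eq_zero {K Γ : Type*} [Ring K] [Nontrivial K] [AddGroup Γ]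
    [IsAddTorsionFree Γ] {vK : K → Γ}
    (hvK : ∀ x y : K, x ≠ 0 → y ≠ 0 → vK (x * y) = vK x + vK y) : vK (-1) = 0 := by
  have h_one : vK 1 = 0 := by
    simpa using hvK 1 1 one_ne_zero one_ne_zero
  have h_neg_one := hvK (-1) (-1) (neg_ne_zero.2 one_ne_zero) (neg_ne_zero.2 one_ne_zero)
  rw [neg_mul_neg, one_mul, h_one, ← two_nsmul] at h_neg_one
  exact two_nsmul_eq_zero.1 h_neg_one.symm

section Ultrametric

variable {V ΓV : Type*} [AddCommGroup V] [LinearOrder ΓV] {val : V → ΓV}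

theorem val_add_eq_left_of_lt
    (hval_ultra : ∀ x y : V, x ≠ 0 → y ≠ 0 → x + y ≠ 0 → min (val x) (val y) ≤ val (x + y))
    (hval_neg : ∀ x : V, x ≠ 0 → val (-x) = val x) {x y : V} (hx : x ≠ 0) (hy : y ≠ 0)
    (hlt : val x < val y) : x + y ≠ 0 ∧ val (x + y) = val x := by
  have hxy : x + y ≠ 0 := by
    rintro h
    rw [eq_neg_of_add_eq_zero_left h, hval_neg y hy] at hlt
    exact hlt.false
  refine ⟨hxy, le_antisymm ?_ (min_eq_left hlt.le ▸ hval_ultra x y hx hy hxy)⟩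
  by_contra! hgt
  -- `x = (x + y) + (-y)` with both summands of value larger than `val x`
  have h := hval_ultra (x + y) (-y) hxy (neg_ne_zero.2 hy) (by simpa using hx)
  rw [hval_neg y hy, add_neg_cancel_right] at h
  exact (lt_min hgt hlt).not_ge h

theorem val_add_eq_min_of_ne
    (hval_ultra : ∀ x y : V, x ≠ 0 → y ≠ 0 → x + y ≠ 0 → min (val x) (val y) ≤ val (x + y))
    (hval_neg : ∀ x : V, x ≠ 0 → val (-x) = val x) {x y : V} (hx : x ≠ 0) (hy : y ≠ 0)
    (hne : val x ≠ val y) : x + y ≠ 0 ∧ val (x + y) = min (val x) (val y) := by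
  rcases hne.lt_or_gt with hlt | hgt
  · rw [min_eq_left hlt.le]
    exact val_add_eq_left_of_lt hval_ultra hval_neg hx hy hlt
  · rw [min_eq_right hgt.le, add_comm]
    exact val_add_eq_left_of_lt hval_ultra hval_neg hy hx hgt

theorem sum_ne_zero_and_exists_val_sum_eq
    (hval_ultra : ∀ x y : V, x ≠ 0 → y ≠ 0 → x + y ≠ 0 → min (val x) (val y) ≤ val (x + y))
    (hval_neg : ∀ x : V, x ≠ 0 → val (-x) = val x) {ι : Type*} {y : ι → V} {s : Finset ι}
    (hs : s.Nonempty) (hy : ∀ i ∈ s, y i ≠ 0) (hinj : Set.InjOn (fun i => val (y i)) s) :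
    ∑ i ∈ s, y i ≠ 0 ∧ ∃ i ∈ s, val (∑ j ∈ s, y j) = val (y i) := by
  induction hs using Finset.Nonempty.cons_induction with
  | singleton a => simpa using hy a (Finset.mem_singleton_self a)
  | cons a s ha hs ih =>
    simp only [Finset.mem_cons, forall_eq_or_imp, Finset.coe_cons, Set.injOn_insert ha] at hy hinj
    obtain ⟨hsum, i, hi, hval_sum⟩ := ih hy.2 hinj.1
    have hne : val (y a) ≠ val (∑ j ∈ s, y j) :=
      hval_sum ▸ fun h => hinj.2 ⟨i, hi, h.symm⟩
    obtain ⟨hadd, hval_add⟩ := val_add_eq_min_of_ne hval_ultra hval_neg hy.1 hsum hne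
    rw [Finset.sum_cons]
    refine ⟨hadd, ?_⟩
    rcases min_choice (val (y a)) (val (∑ j ∈ s, y j)) with h | h
    · exact ⟨a, Finset.mem_cons_self a s, hval_add.trans h⟩
    · exact ⟨i, Finset.mem_cons_of_mem hi, (hval_add.trans h).trans hval_sum⟩

theorem linearIndependent_of_pairwise_not_orbitRel {K Γ : Type*} [DivisionRing K] [Module K V]
    [AddGroup Γ] [AddAction Γ ΓV] {vK : K → Γ}
    (hval_ultra : ∀ x y : V, x ≠ 0 → y ≠ 0 → x + y ≠ 0 → min (val x) (val y) ≤ val (x + y))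
    (hval_neg : ∀ x : V, x ≠ 0 → val (-x) = val x)
    (hval_smul : ∀ (α : K) (x : V), α ≠ 0 → x ≠ 0 → val (α • x) = vK α +ᵥ val x)
    {ι : Type*} {f : ι → V} (hf : ∀ i, f i ≠ 0)
    (horb : Pairwise fun i j => ¬ orbitRel Γ ΓV (val (f i)) (val (f j))) :
    LinearIndependent K f := by
  classical
  rw [linearIndependent_iff']
  intro s c hsum i hi
  by_contra hci
  set u := s.filter fun j => c j • f j ≠ 0
  have hu : ∀ j ∈ u, c j • f j ≠ 0 := fun j hj => (Finset.mem_filter.1 hj).2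
  have hcu : ∀ j ∈ u, c j ≠ 0 := fun j hj h => hu j hj (by rw [h, zero_smul])
  have hinj : Set.InjOn (fun j => val (c j • f j)) u := by
    intro j hj k hk hjk
    by_contra hne
    refine horb hne ?_
    simp only [hval_smul _ _ (hcu j hj) (hf j), hval_smul _ _ (hcu k hk) (hf k)] at hjk
    rw [orbitRel_apply, ← orbit_eq_iff, ← orbit_vadd (vK (c j)), hjk, orbit_vadd]
  have hiu : i ∈ u := Finset.mem_filter.2 ⟨hi, smul_ne_zero hci (hf i)⟩
  refine (sum_ne_zero_and_exists_val_sum_eq hval_ultra hval_neg ⟨i, hiu⟩ hu hinj).1 ?_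
  rwa [Finset.sum_filter_ne_zero]

end Ultrametric

theorem valued_vector_space_orbits_le_dim_general
    (K : Type*) [Field K] (Γ : Type*) [AddCommGroup Γ] [LinearOrder Γ] [IsOrderedAddMonoid Γ]
    (vK : K → Γ) (hvK : ∀ x y : K, x ≠ 0 → y ≠ 0 → vK (x * y) = vK x + vK y)
    (V : Type*) [AddCommGroup V] [Module K V] [FiniteDimensional K V]
    (ΓV : Type*) [LinearOrder ΓV]
    (act : Γ → ΓV → ΓV)
    (hact_zero : ∀ γ : ΓV, act 0 γ = γ)
    (hact_add : ∀ (g h : Γ) (γ : ΓV), act (g + h) γ = act g (act h γ))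
    (val : V → ΓV)
    (hval_ultra : ∀ x y : V, x ≠ 0 → y ≠ 0 → x + y ≠ 0 →
        min (val x) (val y) ≤ val (x + y))
    (hval_smul : ∀ (α : K) (x : V), α ≠ 0 → x ≠ 0 →
        val (α • x) = act (vK α) (val x))
    (hval_surj : ∀ γ : ΓV, ∃ x : V, x ≠ 0 ∧ val x = γ) :
    ∃ s : Finset ΓV, s.card ≤ Module.finrank K V ∧
      ∀ γ : ΓV, ∃ x ∈ s, ∃ g : Γ, act g x = γ := by
  let _ : AddAction Γ ΓV := { vadd := act, zero_vadd := hact_zero, add_vadd := hact_add }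
  have hval_neg (x : V) (hx : x ≠ 0) : val (-x) = val x := by
    rw [← neg_one_smul K x, hval_smul _ _ (neg_ne_zero.2 one_ne_zero) hx,
      map_neg_one_eq_zero hvK]
    exact hact_zero _
  choose rep hrep_ne hrep_val using hval_surj
  have hli : LinearIndependent K fun ω : orbitRel.Quotient Γ ΓV => rep ω.out :=
    linearIndependent_of_pairwise_not_orbitRel (Γ := Γ) (vK := vK) hval_ultra hval_neg hval_smul
      (fun _ => hrep_ne _) fun ω ω' hne hrel =>
        hne (Quotient.out_equiv_out.1 (by simpa only [hrep_val] using hrel))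
  have : Fintype (orbitRel.Quotient Γ ΓV) := haveI := hli.finite; Fintype.ofFinite _
  refine ⟨Finset.univ.image Quotient.out,
    Finset.card_image_le.trans hli.fintype_card_le_finrank, fun γ => ?_⟩
  exact ⟨_, Finset.mem_image_of_mem _ (Finset.mem_univ (Quotient.mk (orbitRel Γ ΓV) γ)),
    mem_orbit_iff.1 (orbitRel_apply.1 ((orbitRel Γ ΓV).iseqv.symm (Quotient.mk_out γ)))⟩

/-- Let `V` be a finite-dimensional valued vector space over a valued field `K` with
(additive) value group `Γ`: `Γ(V)` is a linear order on which `Γ` acts order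
preservingly, and `val : V∖{0} → Γ(V)` satisfies the ultrametric inequality and
`val (α • x) = v(α) + val x`, with `Γ(V) = val(V∖{0})`.  Then the action of `Γ` on
`Γ(V)` has at most `dim_K V` orbits. -/
theorem valued_vector_space_orbits_le_dim
    (K : Type*) [Field K] (Γ : Type*) [AddCommGroup Γ] [LinearOrder Γ] [IsOrderedAddMonoid Γ]
    (vK : K → Γ) (hvK : ∀ x y : K, x ≠ 0 → y ≠ 0 → vK (x * y) = vK x + vK y)
    (V : Type*) [AddCommGroup V] [Module K V] [FiniteDimensional K V]
    (ΓV : Type*) [LinearOrder ΓV]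
    (act : Γ → ΓV → ΓV)
    (hact_zero : ∀ γ : ΓV, act 0 γ = γ)
    (hact_add : ∀ (g h : Γ) (γ : ΓV), act (g + h) γ = act g (act h γ))
    (hact_mono₁ : ∀ g : Γ, Monotone (act g))
    (hact_mono₂ : ∀ γ : ΓV, Monotone (fun g : Γ => act g γ))
    (val : V → ΓV)
    (hval_ultra : ∀ x y : V, x ≠ 0 → y ≠ 0 → x + y ≠ 0 →
        min (val x) (val y) ≤ val (x + y))
    (hval_smul : ∀ (α : K) (x : V), α ≠ 0 → x ≠ 0 →
        val (α • x) = act (vK α) (val x))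
    (hval_surj : ∀ γ : ΓV, ∃ x : V, x ≠ 0 ∧ val x = γ) :
    ∃ s : Finset ΓV, s.card ≤ Module.finrank K V ∧
      ∀ γ : ΓV, ∃ x ∈ s, ∃ g : Γ, act g x = γ :=
  valued_vector_space_orbits_le_dim_general K Γ vK hvK V ΓV act hact_zero hact_add val hval_ultra
    hval_smul hval_surj
end

section
/- Let (V, Γ(V), val) be a valued vector space over a valued field K and W ⊆ V a subspace. Then W is maximal in V (every family of nested balls with centers in W and radii in Γ(W) that has nonempty intersection in V has nonempty intersection in W) if and only if W has the optimal approximation property in V (for every v ∈ V∖W, the set {val(v − w) : w ∈ W} attains a maximum). -/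
/-!
In an ultrametric space two balls that meet are nested, and every point of a ball is a center
of it. If `v ∉ W` has no best approximation in `W`, the balls centered at the improving
approximations `w'` with radius `val (v - w)` form a nested family (with radii realised in `W`)
containing `v`; a point `u ∈ W` in all of them would have `u` at distance `val (v - u)` from a
strictly better approximation, which puts `v` in its own ball around `u`. Conversely, a best
approximation `w` of a point `x ∉ W` lies in every ball centered in `W` that contains `x`.
-/

lemma eq_of_monotone_of_swap {α : Type*} [LinearOrder α] {f : α → α} (hf : Monotone f)
    {a b : α} (ha : f a = b) (hb : f b = a) : a = b := by
  rcases le_total a b with h | h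
  · exact le_antisymm h (by simpa only [ha, hb] using hf h)
  · exact le_antisymm (by simpa only [ha, hb] using hf h) h

section ValBall

universe u

variable {V : Type u} {ΓV : Type*} [AddCommGroup V] [LinearOrder ΓV] {val : V → ΓV}

/-- The center is included explicitly since `val 0` need not be a top element. -/
def valBall (val : V → ΓV) (c : V) (γ : ΓV) : Set V := {x | x = c ∨ γ < val (x - c)}

lemma mem_valBall_comm (hneg : ∀ x, val (-x) = val x) {x c : V} {γ : ΓV} :
    x ∈ valBall val c γ ↔ c ∈ valBall val x γ := by
  show x = c ∨ γ < val (x - c) ↔ c = x ∨ γ < val (c - x)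
  rw [← hneg (x - c), neg_sub, eq_comm]

lemma valBall_subset_valBall (hultra : ∀ x y, min (val x) (val y) ≤ val (x + y))
    {c c' : V} {γ γ' : ΓV} (hγ : γ ≤ γ') (hc : c' ∈ valBall val c γ) :
    valBall val c' γ' ⊆ valBall val c γ := by
  rintro x (rfl | hx)
  · exact hc
  rcases hc with rfl | hc
  · exact Or.inr (hγ.trans_lt hx)
  · have h := hultra (x - c') (c' - c)
    rw [sub_add_sub_cancel] at h
    exact Or.inr ((lt_min (hγ.trans_lt hx) hc).trans_le h)

lemma valBall_subset_of_mem (hultra : ∀ x y, min (val x) (val y) ≤ val (x + y))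
    (hneg : ∀ x, val (-x) = val x) {x c c' : V} {γ γ' : ΓV} (hγ : γ ≤ γ')
    (hx : x ∈ valBall val c γ) (hx' : x ∈ valBall val c' γ') :
    valBall val c' γ' ⊆ valBall val c γ :=
  valBall_subset_valBall hultra hγ
    (valBall_subset_valBall hultra hγ hx ((mem_valBall_comm hneg).1 hx'))

lemma val_sub_eq_of_lt (hultra : ∀ x y, min (val x) (val y) ≤ val (x + y))
    (hneg : ∀ x, val (-x) = val x) {a b : V} (h : val a < val b) : val (a - b) = val a := by
  refine le_antisymm (not_lt.1 fun hlt => ?_) ?_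
  · have h' := hultra (a - b) b
    rw [sub_add_cancel] at h'
    exact (lt_min hlt h).not_ge h'
  · simpa [sub_eq_add_neg, hneg, min_eq_left h.le] using hultra a (-b)

def IsValMaximal (val : V → ΓV) (W : AddSubgroup V) : Prop :=
  ∀ (ι : Type u) (c : ι → V) (γ : ι → ΓV),
    (∀ i, c i ∈ W) →
    (∀ i, ∃ w ∈ W, val w = γ i) →
    (∀ i j, valBall val (c i) (γ i) ⊆ valBall val (c j) (γ j) ∨
      valBall val (c j) (γ j) ⊆ valBall val (c i) (γ i)) →
    (⋂ i, valBall val (c i) (γ i)).Nonempty →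
    ((W : Set V) ∩ ⋂ i, valBall val (c i) (γ i)).Nonempty

def HasOptimalApproximation (val : V → ΓV) (W : AddSubgroup V) : Prop :=
  ∀ v : V, v ∉ W → ∃ w ∈ W, ∀ w' ∈ W, val (v - w') ≤ val (v - w)

variable (hultra : ∀ x y, min (val x) (val y) ≤ val (x + y)) (hneg : ∀ x, val (-x) = val x)
include hultra hneg

theorem IsValMaximal.hasOptimalApproximation {W : AddSubgroup V} (hW : IsValMaximal val W) :
    HasOptimalApproximation val W := by
  intro v hv
  by_contra! hopt
  let ι := {p : V × V // p.1 ∈ W ∧ p.2 ∈ W ∧ val (v - p.1) < val (v - p.2)}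
  have hv_mem (p : ι) : v ∈ valBall val p.1.2 (val (v - p.1.1)) := Or.inr p.2.2.2
  have hradius (p : ι) : ∃ w ∈ W, val w = val (v - p.1.1) :=
    ⟨p.1.2 - p.1.1, W.sub_mem p.2.2.1 p.2.1, by
      rw [← sub_sub_sub_cancel_left p.1.1 p.1.2 v, val_sub_eq_of_lt hultra hneg p.2.2.2]⟩
  have hnested (p q : ι) :
      valBall val p.1.2 (val (v - p.1.1)) ⊆ valBall val q.1.2 (val (v - q.1.1)) ∨
        valBall val q.1.2 (val (v - q.1.1)) ⊆ valBall val p.1.2 (val (v - p.1.1)) :=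
    (le_total (val (v - p.1.1)) (val (v - q.1.1))).symm.imp
      (fun h => valBall_subset_of_mem hultra hneg h (hv_mem q) (hv_mem p))
      (fun h => valBall_subset_of_mem hultra hneg h (hv_mem p) (hv_mem q))
  obtain ⟨u, huW, hu⟩ := hW ι (fun p => p.1.2) (fun p => val (v - p.1.1)) (fun p => p.2.2.1)
    hradius hnested ⟨v, Set.mem_iInter.2 hv_mem⟩
  obtain ⟨w', hw'W, hlt⟩ := hopt u huW
  have hu' : u ∈ valBall val w' (val (v - u)) := Set.mem_iInter.1 hu ⟨(u, w'), huW, hw'W, hlt⟩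
  rcases valBall_subset_valBall hultra le_rfl ((mem_valBall_comm hneg).1 hu') (Or.inr hlt)
    with rfl | h
  · exact hv huW
  · exact lt_irrefl _ h

theorem HasOptimalApproximation.isValMaximal {W : AddSubgroup V}
    (hW : HasOptimalApproximation val W) : IsValMaximal val W := by
  rintro ι c γ hcW - - ⟨x, hx⟩
  by_cases hxW : x ∈ W
  · exact ⟨x, hxW, hx⟩
  obtain ⟨w, hwW, hw⟩ := hW x hxW
  refine ⟨w, hwW, Set.mem_iInter.2 fun i => ?_⟩
  rcases Set.mem_iInter.1 hx i with hxc | hγ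
  · exact absurd (hxc ▸ hcW i) hxW
  have hwx : w ∈ valBall val x (γ i) :=
    (mem_valBall_comm hneg).1 (Or.inr (hγ.trans_le (hw (c i) (hcW i))))
  exact valBall_subset_valBall hultra le_rfl (Or.inr hγ) hwx

theorem isValMaximal_iff_hasOptimalApproximation (W : AddSubgroup V) :
    IsValMaximal val W ↔ HasOptimalApproximation val W :=
  ⟨IsValMaximal.hasOptimalApproximation hultra hneg,
    HasOptimalApproximation.isValMaximal hultra hneg⟩

end ValBall

theorem maximal_in_iff_optimal_approximation_general
    (K : Type) [Field K] (Γ : Type)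
    (vK : K → Γ)
    (V : Type) [AddCommGroup V] [Module K V]
    (ΓV : Type) [LinearOrder ΓV]
    (act : Γ → ΓV → ΓV)
    (hact_mono₁ : ∀ g : Γ, Monotone (act g))
    (val : V → ΓV)
    (hval_ultra : ∀ x y : V, min (val x) (val y) ≤ val (x + y))
    (hval_smul : ∀ (α : K) (x : V), α ≠ 0 → val (α • x) = act (vK α) (val x))
    (W : Submodule K V) :
    -- `W` is maximal in `V`
    (∀ (ι : Type) (c : ι → V) (γ : ι → ΓV),
      (∀ i, c i ∈ W) →
      (∀ i, ∃ w ∈ W, val w = γ i) →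
      (∀ i j,
        {x : V | x = c i ∨ γ i < val (x - c i)} ⊆ {x : V | x = c j ∨ γ j < val (x - c j)} ∨
        {x : V | x = c j ∨ γ j < val (x - c j)} ⊆ {x : V | x = c i ∨ γ i < val (x - c i)}) →
      (⋂ i, {x : V | x = c i ∨ γ i < val (x - c i)}).Nonempty →
      ((W : Set V) ∩ ⋂ i, {x : V | x = c i ∨ γ i < val (x - c i)}).Nonempty)
    ↔
    -- `W` has the optimal approximation property in `V`
    (∀ v : V, v ∉ W → ∃ w ∈ W, ∀ w' ∈ W, val (v - w') ≤ val (v - w)) := by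
  -- `act (vK (-1))` is a monotone map swapping `val x` and `val (-x)`.
  have hneg (x : V) : val (-x) = val x := by
    have hsmul (y : V) : val (-y) = act (vK (-1)) (val y) := by
      rw [← hval_smul (-1) y (neg_ne_zero.2 one_ne_zero), neg_one_smul]
    exact (eq_of_monotone_of_swap (hact_mono₁ (vK (-1))) (hsmul x).symm
      (by rw [← hsmul, neg_neg])).symm
  exact isValMaximal_iff_hasOptimalApproximation hval_ultra hneg W.toAddSubgroup

/-- Let `(V, Γ(V), val)` be a valued vector space over a valued field `K` (with
additive value group `Γ` acting order-preservingly on the linear order `Γ(V)`),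
and let `W ⊆ V` be a subspace.  Then `W` is maximal in `V` (every nested family of
balls with centers in `W` and radii in `Γ(W)` which has nonempty intersection in
`V` has nonempty intersection in `W`) if and only if `W` has the optimal
approximation property in `V` (for every `v ∈ V ∖ W` the set
`{val (v − w) : w ∈ W}` attains a maximum). -/
theorem maximal_in_iff_optimal_approximation
    (K : Type) [Field K] (Γ : Type) [AddCommGroup Γ] [LinearOrder Γ] [IsOrderedAddMonoid Γ]
    (vK : K → Γ) (hvK : ∀ x y : K, x ≠ 0 → y ≠ 0 → vK (x * y) = vK x + vK y)
    (V : Type) [AddCommGroup V] [Module K V]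
    (ΓV : Type) [LinearOrder ΓV]
    (act : Γ → ΓV → ΓV)
    (hact_zero : ∀ γ : ΓV, act 0 γ = γ)
    (hact_add : ∀ (g h : Γ) (γ : ΓV), act (g + h) γ = act g (act h γ))
    (hact_mono₁ : ∀ g : Γ, Monotone (act g))
    (hact_mono₂ : ∀ γ : ΓV, Monotone (fun g : Γ => act g γ))
    (val : V → ΓV)
    (hval_ultra : ∀ x y : V, min (val x) (val y) ≤ val (x + y))
    (hval_smul : ∀ (α : K) (x : V), α ≠ 0 → val (α • x) = act (vK α) (val x))
    (W : Submodule K V) :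
    -- `W` is maximal in `V`
    (∀ (ι : Type) (c : ι → V) (γ : ι → ΓV),
      (∀ i, c i ∈ W) →
      (∀ i, ∃ w ∈ W, val w = γ i) →
      (∀ i j,
        {x : V | x = c i ∨ γ i < val (x - c i)} ⊆ {x : V | x = c j ∨ γ j < val (x - c j)} ∨
        {x : V | x = c j ∨ γ j < val (x - c j)} ⊆ {x : V | x = c i ∨ γ i < val (x - c i)}) →
      (⋂ i, {x : V | x = c i ∨ γ i < val (x - c i)}).Nonempty →
      ((W : Set V) ∩ ⋂ i, {x : V | x = c i ∨ γ i < val (x - c i)}).Nonempty)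
    ↔
    -- `W` has the optimal approximation property in `V`
    (∀ v : V, v ∉ W → ∃ w ∈ W, ∀ w' ∈ W, val (v - w') ≤ val (v - w)) :=
  maximal_in_iff_optimal_approximation_general K Γ vK V ΓV act hact_mono₁ val hval_ultra hval_smul W
end

section
/- Let K be a maximal valued field and V = K^n a valued K-vector space induced by a valued relation R. Then there exists a separated basis {v₁,…,vₙ} of K^n: for all λ₁,…,λₙ ∈ K, val(λ₁v₁ + ⋯ + λₙvₙ) = min{v(λᵢ) + val(vᵢ) : 1 ≤ i ≤ n}. -/
/-!
The basis is built one vector at a time. If `b` is a separated basis of `W` and `v ∉ W`, pick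
`w ∈ W` maximising `val (v + w)`; for `u = v + w` one gets `val (w' + t • u) ≤ val (t • u)` for all
`w' ∈ W`, hence `val (w' + t • u) = min (val w') (val (t • u))`, so appending `u` to `b` keeps it
separated. The maximum exists because `K` is maximal: by separation, `f μ ≤ f μ'` for
`f μ = val (v + ∑ μ j • b j)` forces `f μ ≤ val ((μ' i - μ i) • b i)` for every coordinate `i`, so
each coordinate runs through a nest of balls on the line `K ∙ b i`, and a common point of these
nests is a maximiser.
-/

open Set Submodule

universe u

section Definitions

variable {K : Type u} {Γ : Type*} [Field K] [LinearOrder Γ]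

/-- `vK 0` is unconstrained, so the centre is put in by hand. -/
def valuationBall (vK : K → Γ) (c : K) (γ : Γ) : Set K :=
  {x | x = c ∨ γ ≤ vK (x - c)}

def IsSphericallyComplete (vK : K → Γ) : Prop :=
  ∀ (ι : Type u) (c : ι → K) (γ : ι → Γ),
    (∀ i j, (valuationBall vK (c i) (γ i) ∩ valuationBall vK (c j) (γ j)).Nonempty) →
      (⋂ i, valuationBall vK (c i) (γ i)).Nonempty

structure IsValuedSpace {ΓV V : Type*} [LinearOrder ΓV] [AddCommGroup V] [Module K V]
    (vK : K → Γ) (act : Γ → ΓV → ΓV) (val : V → ΓV) : Prop where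
  act_mono : ∀ g, Monotone (act g)
  act_mono_left : ∀ γ, Monotone fun g => act g γ
  ultra : ∀ x y, min (val x) (val y) ≤ val (x + y)
  smul : ∀ (α : K) x, α ≠ 0 → val (α • x) = act (vK α) (val x)

/-- Given the ultrametric inequality, this says `val (∑ j, μ j • b j) = min_j val (μ j • b j)`. -/
def IsSeparated (K : Type*) {ΓV V ι : Type*} [Field K] [LinearOrder ΓV] [AddCommGroup V]
    [Module K V] [Fintype ι] (val : V → ΓV) (b : ι → V) : Prop :=
  ∀ (μ : ι → K) (i : ι), val (∑ j, μ j • b j) ≤ val (μ i • b i)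

end Definitions

variable {K : Type u} {Γ ΓV V : Type*} [Field K] [LinearOrder Γ] [LinearOrder ΓV] [AddCommGroup V]
  [Module K V] {vK : K → Γ} {act : Γ → ΓV → ΓV} {val : V → ΓV}

namespace IsValuedSpace

/-- `act (vK (-1))` is a monotone map exchanging `val x` and `val (-x)`, so it fixes both. -/
theorem val_neg (hV : IsValuedSpace vK act val) (x : V) : val (-x) = val x := by
  have h₁ : val (-x) = act (vK (-1)) (val x) := by
    rw [← hV.smul _ _ (neg_ne_zero.mpr one_ne_zero), neg_one_smul]
  have h₂ : val x = act (vK (-1)) (val (-x)) := by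
    rw [← hV.smul _ _ (neg_ne_zero.mpr one_ne_zero), neg_one_smul, neg_neg]
  rcases le_total (val x) (val (-x)) with h | h
  · exact le_antisymm ((h₁.trans_le (hV.act_mono _ h)).trans_eq h₂.symm) h
  · exact le_antisymm h ((h₂.trans_le (hV.act_mono _ h)).trans_eq h₁.symm)

theorem val_le_val_zero (hV : IsValuedSpace vK act val) (x : V) : val x ≤ val 0 := by
  simpa [hV.val_neg] using hV.ultra x (-x)

theorem min_le_val_sub (hV : IsValuedSpace vK act val) (x y : V) :
    min (val x) (val y) ≤ val (x - y) := by
  simpa [hV.val_neg, sub_eq_add_neg] using hV.ultra x (-y)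

theorem val_add_eq_left_of_lt (hV : IsValuedSpace vK act val) {x y : V} (h : val x < val y) :
    val (x + y) = val x := by
  refine le_antisymm ?_ (min_eq_left h.le ▸ hV.ultra x y)
  by_contra! hlt
  exact (lt_min hlt h).not_ge (by simpa using hV.min_le_val_sub (x + y) y)

theorem val_le_val_sum (hV : IsValuedSpace vK act val) {ι : Type*} (s : Finset ι) (f : ι → V)
    (y : V) (h : ∀ i ∈ s, val y ≤ val (f i)) : val y ≤ val (∑ i ∈ s, f i) :=
  Finset.sum_induction f (fun z => val y ≤ val z)
    (fun _ _ ha hb => (le_min ha hb).trans (hV.ultra _ _)) (hV.val_le_val_zero y) h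

theorem val_add_smul_le_val_smul (hV : IsValuedSpace vK act val) {W : Submodule K V} {u : V}
    (hu : ∀ w ∈ W, val (u + w) ≤ val u) {w : V} (hw : w ∈ W) (t : K) :
    val (w + t • u) ≤ val (t • u) := by
  rcases eq_or_ne t 0 with rfl | ht
  · simpa using hV.val_le_val_zero w
  have : w + t • u = t • (u + t⁻¹ • w) := by
    rw [smul_add, smul_smul, mul_inv_cancel₀ ht, one_smul, add_comm]
  rw [this, hV.smul _ _ ht, hV.smul _ _ ht]
  exact hV.act_mono _ (hu _ (W.smul_mem _ hw))

theorem val_add_smul_le_val (hV : IsValuedSpace vK act val) {W : Submodule K V} {u : V}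
    (hu : ∀ w ∈ W, val (u + w) ≤ val u) {w : V} (hw : w ∈ W) (t : K) :
    val (w + t • u) ≤ val w := by
  rcases lt_or_ge (val w) (val (t • u)) with h | h
  · exact (hV.val_add_eq_left_of_lt h).le
  · exact (hV.val_add_smul_le_val_smul hu hw t).trans h

theorem val_sub_smul_comm (hV : IsValuedSpace vK act val) (x y : K) (e : V) :
    val ((x - y) • e) = val ((y - x) • e) := by
  rw [← neg_sub, neg_smul, hV.val_neg]

theorem le_val_sub_smul_trans (hV : IsValuedSpace vK act val) {γ : ΓV} {x y z : K} {e : V}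
    (hxy : γ ≤ val ((x - y) • e)) (hyz : γ ≤ val ((y - z) • e)) : γ ≤ val ((x - z) • e) := by
  simpa [← add_smul] using (le_min hxy hyz).trans (hV.ultra _ _)

theorem act_le_val_sub_smul (hV : IsValuedSpace vK act val) {x c : K} {r : Γ}
    (hx : x ∈ valuationBall vK c r) (hne : x ≠ c) (e : V) :
    act r (val e) ≤ val ((x - c) • e) := by
  rw [hV.smul _ _ (sub_ne_zero.mpr hne)]
  exact hV.act_mono_left _ (hx.resolve_left hne)

end IsValuedSpace

namespace IsSeparated

variable {ι : Type*} [Fintype ι] {b : ι → V}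

theorem val_sum_eq (hV : IsValuedSpace vK act val) (hb : IsSeparated K val b) (μ : ι → K) (i : ι)
    (hi : μ i ≠ 0)
    (hmin : ∀ j, μ j ≠ 0 → act (vK (μ i)) (val (b i)) ≤ act (vK (μ j)) (val (b j))) :
    val (∑ j, μ j • b j) = act (vK (μ i)) (val (b i)) := by
  rw [← hV.smul _ _ hi]
  refine le_antisymm (hb μ i) (hV.val_le_val_sum _ _ _ fun j _ => ?_)
  rcases eq_or_ne (μ j) 0 with hj | hj
  · simpa [hj] using hV.val_le_val_zero _
  · rw [hV.smul _ _ hi, hV.smul _ _ hj]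
    exact hmin j hj

theorem snoc (hV : IsValuedSpace vK act val) {n : ℕ} {b : Fin n → V} (hb : IsSeparated K val b)
    {u : V} (hu : ∀ w ∈ span K (range b), val (u + w) ≤ val u) :
    IsSeparated K val (Fin.snoc b u : Fin (n + 1) → V) := by
  intro μ i
  have hw : ∑ j, μ j.castSucc • b j ∈ span K (range b) :=
    sum_mem fun j _ => smul_mem _ _ (subset_span (mem_range_self j))
  rw [Fin.sum_univ_castSucc]
  simp only [Fin.snoc_castSucc, Fin.snoc_last]
  induction i using Fin.lastCases with
  | last => simpa using hV.val_add_smul_le_val_smul hu hw _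
  | cast k => simpa using (hV.val_add_smul_le_val hu hw _).trans (hb _ k)

end IsSeparated

/-- The sets `{x | γ i ≤ val ((x - c i) • e)}` are unions of valuation balls, in general with no
smallest radius. Either every index has a later one whose subsequent centres all lie in a single
valuation ball inside that set, and spherical completeness applies to these balls; or some index
`i₀` has none, and then `c i₀` itself lies in all the sets. -/
theorem IsSphericallyComplete.exists_le_val_sub_smul (hK : IsSphericallyComplete vK)
    (hV : IsValuedSpace vK act val) (e : V) {ι : Type u} (c : ι → K) (γ : ι → ΓV)
    (hc : ∀ i j, γ i ≤ γ j → γ i ≤ val ((c j - c i) • e)) :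
    ∃ x, ∀ i, γ i ≤ val ((x - c i) • e) := by
  by_cases hstable : ∃ i₀, ∀ i, γ i₀ ≤ γ i → ∀ r, γ i₀ ≤ act r (val e) →
      ∃ k, γ i ≤ γ k ∧ c k ∉ valuationBall vK (c i) r
  · obtain ⟨i₀, hi₀⟩ := hstable
    refine ⟨c i₀, fun i => ?_⟩
    rcases le_total (γ i) (γ i₀) with h | h
    · exact hc i i₀ h
    rw [hV.val_sub_smul_comm]
    rcases eq_or_ne (c i) (c i₀) with heq | hne
    · simpa [heq] using hc i i le_rfl
    have hball : γ i₀ ≤ act (vK (c i - c i₀)) (val e) := by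
      rw [← hV.smul _ _ (sub_ne_zero.mpr hne)]
      exact hc i₀ i h
    obtain ⟨k, hik, hk⟩ := hi₀ i h _ hball
    simp only [valuationBall, mem_ofPred_eq, not_or, not_le] at hk
    calc γ i ≤ val ((c k - c i) • e) := hc i k hik
      _ = act (vK (c k - c i)) (val e) := hV.smul _ _ (sub_ne_zero.mpr hk.1)
      _ ≤ act (vK (c i - c i₀)) (val e) := hV.act_mono_left _ hk.2.le
      _ = val ((c i - c i₀) • e) := (hV.smul _ _ (sub_ne_zero.mpr hne)).symm
  · push Not at hstable
    choose j hj r hr hball using hstable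
    obtain ⟨x, hx⟩ := hK ι (c ∘ j) r fun i₁ i₂ => by
      rcases le_total (γ (j i₁)) (γ (j i₂)) with h | h
      · exact ⟨c (j i₂), hball i₁ _ h, hball i₂ _ le_rfl⟩
      · exact ⟨c (j i₁), hball i₁ _ le_rfl, hball i₂ _ h⟩
    refine ⟨x, fun i => ?_⟩
    rcases eq_or_ne x (c (j i)) with rfl | hne
    · exact hc i (j i) (hj i)
    · exact hV.le_val_sub_smul_trans
        ((hr i).trans (hV.act_le_val_sub_smul (mem_iInter.mp hx i) hne e)) (hc i (j i) (hj i))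

theorem IsSeparated.exists_max_val_add (hK : IsSphericallyComplete vK)
    (hV : IsValuedSpace vK act val) {ι : Type} [Fintype ι] {b : ι → V} (hb : IsSeparated K val b)
    (v : V) : ∃ w ∈ span K (range b), ∀ w' ∈ span K (range b), val (v + w') ≤ val (v + w) := by
  set f : (ι → K) → ΓV := fun μ => val (v + ∑ j, μ j • b j)
  have hdiff : ∀ μ μ' : ι → K,
      v + ∑ j, μ' j • b j - (v + ∑ j, μ j • b j) = ∑ j, (μ' - μ) j • b j := by
    intro μ μ'
    simp [sub_smul, Finset.sum_sub_distrib]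
  have hnest : ∀ i μ μ', f μ ≤ f μ' → f μ ≤ val ((μ' i - μ i) • b i) := by
    intro i μ μ' h
    have := hV.min_le_val_sub (v + ∑ j, μ' j • b j) (v + ∑ j, μ j • b j)
    rw [hdiff, min_eq_right h] at this
    exact this.trans (hb _ i)
  choose x hx using fun i => hK.exists_le_val_sub_smul hV (b i) (fun μ : ι → K => μ i) f (hnest i)
  refine ⟨∑ j, x j • b j, sum_mem fun j _ => smul_mem _ _ (subset_span (mem_range_self j)), ?_⟩
  intro w' hw'
  obtain ⟨μ, rfl⟩ := (mem_span_range_iff_exists_fun K).mp hw'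
  have hx' : f μ ≤ val (∑ j, (x - μ) j • b j) :=
    hV.val_le_val_sum _ _ _ fun j _ => hx j μ
  calc f μ ≤ min (f μ) (val (∑ j, (x - μ) j • b j)) := le_min le_rfl hx'
    _ ≤ val (v + ∑ j, x j • b j) := by
      rw [← hdiff μ x]
      simpa using hV.ultra (v + ∑ j, μ j • b j) (v + ∑ j, x j • b j - (v + ∑ j, μ j • b j))

theorem IsValuedSpace.exists_linearIndependent_isSeparated (hK : IsSphericallyComplete vK)
    (hV : IsValuedSpace vK act val) {n : ℕ} (e : Fin n → V) (he : LinearIndependent K e) :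
    ∃ b : Fin n → V, LinearIndependent K b ∧ IsSeparated K val b ∧
      span K (range b) ≤ span K (range e) := by
  induction n with
  | zero => exact ⟨e, he, fun _ i => i.elim0, le_rfl⟩
  | succ n ih =>
    obtain ⟨hinit, hlast⟩ := linearIndependent_finSucc'.mp he
    obtain ⟨b, hb, hsep, hspan⟩ := ih (Fin.init e) hinit
    obtain ⟨w, hw, hmax⟩ := hsep.exists_max_val_add hK hV (e (Fin.last n))
    have hinit_le : span K (range (Fin.init e)) ≤ span K (range e) :=
      span_mono (range_comp_subset_range _ _)
    refine ⟨Fin.snoc b (e (Fin.last n) + w), hb.finSnoc fun hmem => hlast (hspan ?_),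
      hsep.snoc hV fun w' hw' => by simpa [add_assoc] using hmax _ (add_mem hw hw'), ?_⟩
    · simpa using sub_mem hmem hw
    · refine span_le.mpr ?_
      rintro _ ⟨i, rfl⟩
      induction i using Fin.lastCases with
      | last =>
        simpa using add_mem (subset_span (mem_range_self _)) (hinit_le (hspan hw))
      | cast k =>
        simpa using hinit_le (hspan (subset_span (mem_range_self k)))

theorem maximal_field_separated_basis_general
    (K : Type) [Field K] (Γ : Type) [LinearOrder Γ]
    (vK : K → Γ)
    -- `K` is maximal: every pairwise-consistent family of (closed) balls in `K`
    -- has a common point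
    (hKmax : ∀ (ι : Type) (c : ι → K) (γ : ι → Γ),
      (∀ i j, ({x : K | x = c i ∨ γ i ≤ vK (x - c i)} ∩
               {x : K | x = c j ∨ γ j ≤ vK (x - c j)}).Nonempty) →
      (⋂ i, {x : K | x = c i ∨ γ i ≤ vK (x - c i)}).Nonempty)
    (n : ℕ)
    (ΓV : Type) [LinearOrder ΓV]
    (act : Γ → ΓV → ΓV)
    (hact_mono₁ : ∀ g : Γ, Monotone (act g))
    (hact_mono₂ : ∀ γ : ΓV, Monotone (fun g : Γ => act g γ))
    (val : (Fin n → K) → ΓV)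
    (hval_ultra : ∀ x y : Fin n → K, min (val x) (val y) ≤ val (x + y))
    (hval_smul : ∀ (α : K) (x : Fin n → K), α ≠ 0 → val (α • x) = act (vK α) (val x)) :
    ∃ b : Fin n → (Fin n → K),
      LinearIndependent K b ∧
      ∀ (lam : Fin n → K) (i : Fin n), lam i ≠ 0 →
        (∀ j : Fin n, lam j ≠ 0 →
          act (vK (lam i)) (val (b i)) ≤ act (vK (lam j)) (val (b j))) →
        val (∑ j : Fin n, lam j • b j) = act (vK (lam i)) (val (b i)) := by
  have hV : IsValuedSpace vK act val := ⟨hact_mono₁, hact_mono₂, hval_ultra, hval_smul⟩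
  obtain ⟨b, hli, hsep, -⟩ := hV.exists_linearIndependent_isSeparated hKmax
    (Pi.basisFun K (Fin n)) (Pi.basisFun K (Fin n)).linearIndependent
  exact ⟨b, hli, hsep.val_sum_eq hV⟩

/-- Let `K` be a maximal (spherically complete) valued field and `V = K^n` a valued
`K`-vector space (as induced by a valued relation `R`).  Then `K^n` has a separated
basis `v₁, …, vₙ`: for all `λ₁, …, λₙ ∈ K`,
`val (λ₁v₁ + ⋯ + λₙvₙ) = min {v(λᵢ) + val vᵢ : λᵢ ≠ 0}`. -/
theorem maximal_field_separated_basis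
    (K : Type) [Field K] (Γ : Type) [AddCommGroup Γ] [LinearOrder Γ] [IsOrderedAddMonoid Γ]
    (vK : K → Γ) (hvK : ∀ x y : K, x ≠ 0 → y ≠ 0 → vK (x * y) = vK x + vK y)
    -- `K` is maximal: every pairwise-consistent family of (closed) balls in `K`
    -- has a common point
    (hKmax : ∀ (ι : Type) (c : ι → K) (γ : ι → Γ),
      (∀ i j, ({x : K | x = c i ∨ γ i ≤ vK (x - c i)} ∩
               {x : K | x = c j ∨ γ j ≤ vK (x - c j)}).Nonempty) →
      (⋂ i, {x : K | x = c i ∨ γ i ≤ vK (x - c i)}).Nonempty)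
    (n : ℕ)
    (ΓV : Type) [LinearOrder ΓV]
    (act : Γ → ΓV → ΓV)
    (hact_zero : ∀ γ : ΓV, act 0 γ = γ)
    (hact_add : ∀ (g h : Γ) (γ : ΓV), act (g + h) γ = act g (act h γ))
    (hact_mono₁ : ∀ g : Γ, Monotone (act g))
    (hact_mono₂ : ∀ γ : ΓV, Monotone (fun g : Γ => act g γ))
    (val : (Fin n → K) → ΓV)
    (hval_ultra : ∀ x y : Fin n → K, min (val x) (val y) ≤ val (x + y))
    (hval_smul : ∀ (α : K) (x : Fin n → K), α ≠ 0 → val (α • x) = act (vK α) (val x)) :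
    ∃ b : Fin n → (Fin n → K),
      LinearIndependent K b ∧
      ∀ (lam : Fin n → K) (i : Fin n), lam i ≠ 0 →
        (∀ j : Fin n, lam j ≠ 0 →
          act (vK (lam i)) (val (b i)) ≤ act (vK (lam j)) (val (b j))) →
        val (∑ j : Fin n, lam j • b j) = act (vK (lam i)) (val (b i)) :=
  maximal_field_separated_basis_general K Γ vK hKmax n ΓV act hact_mono₁ hact_mono₂ val hval_ultra
    hval_smul
end
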